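/- arXiv:1711.05529 — 5 statements merged into one kernel-verified Lean document; each statement's English description precedes it below -/
import Mathlib

section
/- The 3-dimensional simplicial complex Q* on vertex set {0,1,…,13} whose facets are {2,5,6,12}, {1,5,8,11}, {0,1,2,5}, {1,4,8,9}, {1,2,3,10}, {4,5,8,13}, {0,1,2,3}, {1,4,9,10}, {1,2,9,10}, {1,2,5,6}, {0,2,5,12}, {4,5,7,13}, {1,4,5,8}, {1,2,6,9}, {1,3,4,7}, {1,3,4,10}, {1,5,6,11}, {1,4,5,7}, {1,6,9,11}, {1,8,9,11} is balanced, i.e., there exists a map κ : {0,…,13} → {1,2,3,4} with κ(v) ≠ κ(w) whenever {v,w} is an edge of Q*. -/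
open Finset

namespace SC

variable {V : Type*}

/-- The simplicial complex generated by a finite family of faces:
its faces are all the subsets of the given sets. -/
def closure [DecidableEq V] (facets : Finset (Finset V)) : Finset (Finset V) :=
  facets.sup Finset.powerset

/-- A family of finite subsets of `V` is an (abstract) simplicial complex
if it is closed under taking subsets. -/
def IsComplex (Δ : Finset (Finset V)) : Prop :=
  ∀ F ∈ Δ, ∀ G ⊆ F, G ∈ Δ

/-- The vertex set of a complex. -/
def vertexSet [DecidableEq V] (Δ : Finset (Finset V)) : Finset V := Δ.sup id

/-- The facets (inclusion-maximal faces) of a complex. -/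
def facets [DecidableEq V] (Δ : Finset (Finset V)) : Finset (Finset V) :=
  Δ.filter fun F => ∀ G ∈ Δ, F ⊆ G → F = G

/-- `BalancedWith Δ d` : the 1-skeleton of `Δ` admits a proper `d`-coloring. -/
def BalancedWith [DecidableEq V] (Δ : Finset (Finset V)) (d : ℕ) : Prop :=
  ∃ κ : V → Fin d, ∀ v w : V, v ≠ w → ({v, w} : Finset V) ∈ Δ → κ v ≠ κ w

/-- The link of a face `s` in `Δ`. -/
def link [DecidableEq V] (Δ : Finset (Finset V)) (s : Finset V) : Finset (Finset V) :=
  Δ.filter fun G => Disjoint G s ∧ G ∪ s ∈ Δ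

/-- `IsPartition X Fs R` : the boolean intervals `[R F, F]`, `F ∈ Fs`, are pairwise
disjoint and their union is exactly `X`. -/
def IsPartition (X Fs : Finset (Finset V)) (R : Finset V → Finset V) : Prop :=
  (∀ F ∈ Fs, R F ⊆ F) ∧
  (∀ G : Finset V, G ∈ X ↔ ∃ F ∈ Fs, R F ⊆ G ∧ G ⊆ F) ∧
  (∀ F₁ ∈ Fs, ∀ F₂ ∈ Fs, ∀ G : Finset V,
     R F₁ ⊆ G → G ⊆ F₁ → R F₂ ⊆ G → G ⊆ F₂ → F₁ = F₂)

/-- A complex is partitionable if its set of faces is the disjoint union of boolean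
intervals `[R F, F]`, one for each facet `F`. -/
def Partitionable [DecidableEq V] (Δ : Finset (Finset V)) : Prop :=
  ∃ R : Finset V → Finset V, IsPartition Δ (facets Δ) R

/-- A list of facets is a shelling order if for each `i` the family
`{G ⊆ Fᵢ : G ⊄ Fⱼ for all j < i}` has a unique minimal element w.r.t. inclusion. -/
def IsShelling (l : List (Finset V)) : Prop :=
  ∀ i : Fin l.length, ∃! R : Finset V,
    Minimal (fun G => G ⊆ l.get i ∧ ∀ j : Fin l.length, j < i → ¬ G ⊆ l.get j) R

/-- A complex is shellable if its facets admit a shelling order. -/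
def Shellable [DecidableEq V] (Δ : Finset (Finset V)) : Prop :=
  ∃ l : List (Finset V), l.Nodup ∧ l.toFinset = facets Δ ∧ IsShelling l

/-- The faces of cardinality `m` (i.e. dimension `m - 1`) of `Δ`. -/
def kfaces (Δ : Finset (Finset V)) (m : ℕ) : Finset (Finset V) :=
  Δ.filter fun s => s.card = m

/-- Incidence coefficient of the simplicial boundary map: for `G ⊆ H` with
`#H = #G + 1` it equals `(-1) ^ #{u ∈ G : u < v}` where `H = G ∪ {v}`. -/
def bcoeff [LinearOrder V] (G H : Finset V) : ℤ :=
  if G ⊆ H then ∑ v ∈ H \ G, (-1 : ℤ) ^ (G.filter (· < v)).card else 0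

/-- The (reduced, augmented) simplicial boundary map with coefficients in the field `F`,
from chains supported on faces of cardinality `m + 1` to chains supported on faces of
cardinality `m`; faces of cardinality `0` (the empty face) give the augmentation degree. -/
noncomputable def bdry [LinearOrder V] (Δ : Finset (Finset V)) (F : Type*) [Field F] (m : ℕ) :
    ({s // s ∈ kfaces Δ (m + 1)} → F) →ₗ[F] ({s // s ∈ kfaces Δ m} → F) where
  toFun c G := ∑ H : {s // s ∈ kfaces Δ (m + 1)}, (bcoeff G.1 H.1 : F) * c H
  map_add' c₁ c₂ := by
    funext G
    simp [mul_add, Finset.sum_add_distrib]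
  map_smul' a c := by
    funext G
    simp [Finset.mul_sum, smul_eq_mul, mul_left_comm]

/-- Vanishing of the `i`-th reduced simplicial homology of `Δ` with coefficients
in the field `F`. -/
def HomologyVanishes [LinearOrder V] (Δ : Finset (Finset V)) (F : Type*) [Field F]
    (i : ℤ) : Prop :=
  if i < -1 then True
  else if i = -1 then LinearMap.range (bdry Δ F 0) = ⊤
  else LinearMap.ker (bdry Δ F i.toNat) ≤ LinearMap.range (bdry Δ F (i.toNat + 1))

/-- Reisner's criterion: a `(d-1)`-dimensional complex `Δ` is Cohen-Macaulay over the
field `F` if for every face `s ∈ Δ` (including the empty face) the reduced homology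
of the link of `s` vanishes in all degrees `i ≠ d - 1 - #s`. -/
def IsCohenMacaulay [LinearOrder V] (Δ : Finset (Finset V)) (F : Type*) [Field F] : Prop :=
  ∀ s ∈ Δ, ∀ i : ℤ, i ≠ ((Δ.sup Finset.card : ℕ) : ℤ) - 1 - (s.card : ℤ) →
    HomologyVanishes (link Δ s) F i

instance glueVertexDecEq {V : Type*} [LinearOrder V] {N : ℕ} :
    DecidableEq (Finset (V ⊕ₗ (Fin N ×ₗ V))) := Finset.decidableEq

/-- The map sending the vertices of `W` to themselves and any other vertex to its
copy in the `i`-th component. -/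
def glueMap [DecidableEq V] (W : Finset V) {N : ℕ} (i : Fin N) (v : V) :
    V ⊕ₗ (Fin N ×ₗ V) :=
  if v ∈ W then toLex (Sum.inl v) else toLex (Sum.inr (toLex (i, v)))

/-- The complex obtained from `N` disjoint copies of `Q` by identifying them along the
subcomplex `A` (more precisely, along the vertex set of `A`). -/
def glue [LinearOrder V] (Q A : Finset (Finset V)) (N : ℕ) :
    Finset (Finset (V ⊕ₗ (Fin N ×ₗ V))) :=
  Finset.univ.sup fun i : Fin N => Q.image fun s => s.image (glueMap (vertexSet A) i)

/-- Constructible simplicial complexes. -/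
inductive Constructible {V : Type*} [DecidableEq V] : Finset (Finset V) → Prop
  | simplex (s : Finset V) : Constructible s.powerset
  | union (Δ₁ Δ₂ : Finset (Finset V)) :
      Constructible Δ₁ → Constructible Δ₂ →
      Δ₂.sup Finset.card = Δ₁.sup Finset.card →
      (Δ₁ ∩ Δ₂).sup Finset.card + 1 = Δ₁.sup Finset.card →
      Constructible (Δ₁ ∪ Δ₂)

/-- The subdivision of the edge `{a, b}` of `Δ` with a new vertex `w`. -/
def subdivide [DecidableEq V] (Δ : Finset (Finset V)) (a b w : V) : Finset (Finset V) :=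
  Δ.filter (fun s => ¬ ({a, b} : Finset V) ⊆ s)
    ∪ (Δ.filter fun s => ({a, b} : Finset V) ⊆ s).image (fun s => insert w (s.erase a))
    ∪ (Δ.filter fun s => ({a, b} : Finset V) ⊆ s).image (fun s => insert w (s.erase b))

end SC

/-- The facets of the complex `Q*`. -/
def QstarFacets : Finset (Finset ℕ) :=
  {{2,5,6,12}, {1,5,8,11}, {0,1,2,5}, {1,4,8,9}, {1,2,3,10}, {4,5,8,13}, {0,1,2,3},
   {1,4,9,10}, {1,2,9,10}, {1,2,5,6}, {0,2,5,12}, {4,5,7,13}, {1,4,5,8}, {1,2,6,9},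
   {1,3,4,7}, {1,3,4,10}, {1,5,6,11}, {1,4,5,7}, {1,6,9,11}, {1,8,9,11}}

/-- The complex `Q*`. -/
def Qstar : Finset (Finset ℕ) := SC.closure QstarFacets

/-- The facets of the complex `A*`. -/
def AstarFacets : Finset (Finset ℕ) :=
  {{0,2,3}, {4,7,13}, {3,4,10}, {0,2,12}, {3,4,7}, {2,3,10}, {2,6,12}, {4,8,13}}

/-- The complex `A*`, as generated by its facets. -/
def Astar : Finset (Finset ℕ) := SC.closure AstarFacets

/-- The complex `A*`, as the induced subcomplex of `Q*` on `{0,2,3,4,6,7,8,10,12,13}`. -/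
def AstarInd : Finset (Finset ℕ) :=
  Qstar.filter fun s => s ⊆ ({0,2,3,4,6,7,8,10,12,13} : Finset ℕ)

/-- The facets of the complex `Q` of Duval, Goeckner, Klivans and Martin. -/
def QFacets : Finset (Finset ℕ) :=
  {{1,2,4,9}, {1,2,6,9}, {1,5,6,9}, {1,5,8,9}, {1,4,8,9}, {1,4,5,8}, {1,4,5,7},
   {4,5,7,8}, {1,2,5,6}, {0,1,2,5}, {0,2,5,6}, {0,1,2,3}, {1,2,3,4}, {1,3,4,7}}

/-- The complex `Q` of Duval, Goeckner, Klivans and Martin. -/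
def Qdgkm : Finset (Finset ℕ) := SC.closure QFacets

/-- The induced subcomplex `A` of `Q` on the vertex set `{0,2,3,4,6,7,8}`. -/
def Adgkm : Finset (Finset ℕ) :=
  Qdgkm.filter fun s => s ⊆ ({0,2,3,4,6,7,8} : Finset ℕ)

/-- The permutation `τ' = (0 7)(2 4)(6 8)(12 13)`. -/
def tau' : Equiv.Perm ℕ :=
  Equiv.swap 0 7 * Equiv.swap 2 4 * Equiv.swap 6 8 * Equiv.swap 12 13

/-- The permutation `τ = (0 7)(2 4)(6 8)`. -/
def tau : Equiv.Perm ℕ :=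
  Equiv.swap 0 7 * Equiv.swap 2 4 * Equiv.swap 6 8


theorem Qstar_balanced :
    ∃ κ : ℕ → Fin 4, ∀ v w : ℕ, v ≠ w → ({v, w} : Finset ℕ) ∈ Qstar → κ v ≠ κ w := by
  refine ⟨fun v => ([0,1,2,3,2,3,0,0,0,3,0,2,1,1] : List (Fin 4)).getD v 0, ?_⟩
  intro v w hne h
  simp only [Qstar, SC.closure, QstarFacets, Finset.mem_sup, Finset.mem_insert,
    Finset.mem_singleton, Finset.mem_powerset] at h
  obtain ⟨F, hF, hsub⟩ := h
  have hv : v ∈ F := hsub (by simp)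
  have hw : w ∈ F := hsub (by simp)
  rcases hF with rfl|rfl|rfl|rfl|rfl|rfl|rfl|rfl|rfl|rfl|rfl|rfl|rfl|rfl|rfl|rfl|rfl|rfl|rfl|rfl <;>
    simp only [Finset.mem_insert, Finset.mem_singleton] at hv hw <;>
    rcases hv with rfl|rfl|rfl|rfl <;> rcases hw with rfl|rfl|rfl|rfl <;>
      first | (exact absurd rfl hne) | decide
end

section
/- The 3-dimensional simplicial complex Q* on vertex set {0,1,…,13} whose facets are {2,5,6,12}, {1,5,8,11}, {0,1,2,5}, {1,4,8,9}, {1,2,3,10}, {4,5,8,13}, {0,1,2,3}, {1,4,9,10}, {1,2,9,10}, {1,2,5,6}, {0,2,5,12}, {4,5,7,13}, {1,4,5,8}, {1,2,6,9}, {1,3,4,7}, {1,3,4,10}, {1,5,6,11}, {1,4,5,7}, {1,6,9,11}, {1,8,9,11} is shellable. -/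
open Finset

/-- A concrete shelling order for `Q*`. -/
def QstarOrder : List (Finset ℕ) :=
  [{2,5,6,12}, {1,2,5,6}, {0,1,2,5}, {0,1,2,3}, {1,2,3,10}, {1,2,9,10}, {1,4,9,10},
   {1,4,8,9}, {0,2,5,12}, {1,2,6,9}, {1,3,4,10}, {1,3,4,7}, {1,5,6,11}, {1,6,9,11},
   {1,8,9,11}, {1,5,8,11}, {1,4,5,8}, {4,5,8,13}, {1,4,5,7}, {4,5,7,13}]

/-- Decidable criterion implying `IsShelling`. -/
theorem isShelling_of_card_one {V : Type*} [DecidableEq V] (l : List (Finset V))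
    (h : ∀ i : Fin l.length, ((l.get i).powerset.filter fun G =>
        (∀ j : Fin l.length, j < i → ¬ G ⊆ l.get j) ∧
        ∀ G' ∈ (l.get i).powerset,
          (∀ j : Fin l.length, j < i → ¬ G' ⊆ l.get j) → G' ⊆ G → G ⊆ G').card = 1) :
    SC.IsShelling l := by
  intro i
  obtain ⟨a, ha⟩ := Finset.card_eq_one.mp (h i)
  have hmem : ∀ R : Finset V,
      Minimal (fun G => G ⊆ l.get i ∧ ∀ j : Fin l.length, j < i → ¬ G ⊆ l.get j) R ↔
      R ∈ ((l.get i).powerset.filter fun G =>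
        (∀ j : Fin l.length, j < i → ¬ G ⊆ l.get j) ∧
        ∀ G' ∈ (l.get i).powerset,
          (∀ j : Fin l.length, j < i → ¬ G' ⊆ l.get j) → G' ⊆ G → G ⊆ G') := by
    intro R
    constructor
    · rintro ⟨⟨h1, h2⟩, hmin⟩
      simp only [Finset.mem_filter, Finset.mem_powerset]
      refine ⟨h1, h2, fun G' hG' hG'2 hsub => ?_⟩
      exact hmin ⟨hG', hG'2⟩ (Finset.le_iff_subset.mpr hsub)
    · intro hR
      simp only [Finset.mem_filter, Finset.mem_powerset] at hR
      refine ⟨⟨hR.1, hR.2.1⟩, fun G' hG' hle => ?_⟩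
      exact Finset.le_iff_subset.mpr
        (hR.2.2 G' hG'.1 hG'.2 (Finset.le_iff_subset.mp hle))
  refine ⟨a, ?_, ?_⟩
  · exact (hmem a).mpr (ha ▸ Finset.mem_singleton_self a)
  · intro y hy
    have := (hmem y).mp hy
    rw [ha] at this
    exact Finset.mem_singleton.mp this

set_option maxRecDepth 100000 in
set_option maxHeartbeats 4000000 in
theorem Qstar_shellable : SC.Shellable Qstar := by
  refine ⟨QstarOrder, by decide, by decide, isShelling_of_card_one _ (by decide)⟩
end

section
/- The permutation τ = (0 7)(2 4)(6 8) of {0,1,…,9} is a simplicial automorphism of the complex Q generated by the facets {1,2,4,9}, {1,2,6,9}, {1,5,6,9}, {1,5,8,9}, {1,4,8,9}, {1,4,5,8}, {1,4,5,7}, {4,5,7,8}, {1,2,5,6}, {0,1,2,5}, {0,2,5,6}, {0,1,2,3}, {1,2,3,4}, {1,3,4,7}, and τ maps the induced subcomplex A = {F ∈ Q : F ⊆ {0,2,3,4,6,7,8}} onto itself. -/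
set_option maxRecDepth 10000


open Finset


lemma key : Qdgkm.image (fun F => F.image (tau : ℕ → ℕ)) = Qdgkm := by decide

theorem tau_automorphism :
    (∀ F : Finset ℕ, F ∈ Qdgkm ↔ F.image (tau : ℕ → ℕ) ∈ Qdgkm) ∧
    Adgkm.image (fun F => F.image (tau : ℕ → ℕ)) = Adgkm := by
  constructor
  · intro F
    constructor
    · intro hF
      rw [← key]
      exact Finset.mem_image_of_mem _ hF
    · intro hF
      rw [← key] at hF
      obtain ⟨G, hG, hGF⟩ := Finset.mem_image.mp hF
      have : G = F := Finset.image_injective tau.injective hGF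
      rwa [← this]
  · decide
end

section
/- The 3-dimensional simplicial complex Q on vertex set {0,1,…,9} generated by the facets {1,2,4,9}, {1,2,6,9}, {1,5,6,9}, {1,5,8,9}, {1,4,8,9}, {1,4,5,8}, {1,4,5,7}, {4,5,7,8}, {1,2,5,6}, {0,1,2,5}, {0,2,5,6}, {0,1,2,3}, {1,2,3,4}, {1,3,4,7} is not balanced: there is no map κ : {0,…,9} → {1,2,3,4} with κ(v) ≠ κ(w) whenever {v,w} ∈ Q. -/
open Finset

set_option maxRecDepth 100000 in
theorem Qdgkm_not_balanced :
    ¬ ∃ κ : ℕ → Fin 4, ∀ v w : ℕ, v ≠ w → ({v, w} : Finset ℕ) ∈ Qdgkm → κ v ≠ κ w := by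
  rintro ⟨κ, h⟩
  have e19 := h 1 9 (by decide) (by decide)
  have e12 := h 1 2 (by decide) (by decide)
  have e14 := h 1 4 (by decide) (by decide)
  have e15 := h 1 5 (by decide) (by decide)
  have e16 := h 1 6 (by decide) (by decide)
  have e18 := h 1 8 (by decide) (by decide)
  have e92 := h 9 2 (by decide) (by decide)
  have e94 := h 9 4 (by decide) (by decide)
  have e95 := h 9 5 (by decide) (by decide)
  have e96 := h 9 6 (by decide) (by decide)
  have e98 := h 9 8 (by decide) (by decide)
  have e24 := h 2 4 (by decide) (by decide)
  have e48 := h 4 8 (by decide) (by decide)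
  have e58 := h 5 8 (by decide) (by decide)
  have e56 := h 5 6 (by decide) (by decide)
  have e26 := h 2 6 (by decide) (by decide)
  have v19 : (κ 1).val ≠ (κ 9).val := Fin.val_ne_of_ne e19
  have v12 : (κ 1).val ≠ (κ 2).val := Fin.val_ne_of_ne e12
  have v14 : (κ 1).val ≠ (κ 4).val := Fin.val_ne_of_ne e14
  have v15 : (κ 1).val ≠ (κ 5).val := Fin.val_ne_of_ne e15
  have v16 : (κ 1).val ≠ (κ 6).val := Fin.val_ne_of_ne e16
  have v18 : (κ 1).val ≠ (κ 8).val := Fin.val_ne_of_ne e18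
  have v92 : (κ 9).val ≠ (κ 2).val := Fin.val_ne_of_ne e92
  have v94 : (κ 9).val ≠ (κ 4).val := Fin.val_ne_of_ne e94
  have v95 : (κ 9).val ≠ (κ 5).val := Fin.val_ne_of_ne e95
  have v96 : (κ 9).val ≠ (κ 6).val := Fin.val_ne_of_ne e96
  have v98 : (κ 9).val ≠ (κ 8).val := Fin.val_ne_of_ne e98
  have v24 : (κ 2).val ≠ (κ 4).val := Fin.val_ne_of_ne e24
  have v48 : (κ 4).val ≠ (κ 8).val := Fin.val_ne_of_ne e48
  have v58 : (κ 5).val ≠ (κ 8).val := Fin.val_ne_of_ne e58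
  have v56 : (κ 5).val ≠ (κ 6).val := Fin.val_ne_of_ne e56
  have v26 : (κ 2).val ≠ (κ 6).val := Fin.val_ne_of_ne e26
  have l1 : (κ 1).val < 4 := (κ 1).isLt
  have l9 : (κ 9).val < 4 := (κ 9).isLt
  have l2 : (κ 2).val < 4 := (κ 2).isLt
  have l4 : (κ 4).val < 4 := (κ 4).isLt
  have l5 : (κ 5).val < 4 := (κ 5).isLt
  have l6 : (κ 6).val < 4 := (κ 6).isLt
  have l8 : (κ 8).val < 4 := (κ 8).isLt
  omega
end

section
/- Let Δ be a pure shellable simplicial complex and let e = {a,b} be an edge of Δ. Then the simplicial complex obtained from Δ by subdividing the edge e with a new vertex w is shellable. -/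
open Finset

/-!
Use shellings in exchange form: a facet `Y` may follow the facets `p` when every earlier facet
misses some vertex `x ∈ Y` whose ridge `Y ∖ x` lies in an earlier facet. Keep the order of a
shelling of `Δ`, but replace each facet `F ⊇ {a, b}` by its halves `(F ∖ c) ∪ w`, `(F ∖ d) ∪ w`
with `{c, d} = {a, b}`, taking first the half whose ridge `F ∖ c` is covered before `F`, if any.
The old exchange ridges lift: if `x ∉ {a, b}`, the facet covering `F ∖ x` contains `{a, b}`, and
its halves cover the ridges opposite `x` of the halves of `F`; a covered `F ∖ c` is the ridge of
the first half opposite `w`; and the two halves share their ridge opposite `c`.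
-/

namespace SC

variable {V : Type*} [DecidableEq V] {a b w : V}

def ShellingStep (p : List (Finset V)) (Y : Finset V) : Prop :=
  ∀ X ∈ p, ∃ x ∈ Y, x ∉ X ∧ ∃ Z ∈ p, Y.erase x ⊆ Z

/-- The unique minimal new face is the set of vertices `x` of `Y` with `Y ∖ x` inside an earlier
facet. -/
theorem existsUnique_minimal_iff_shellingStep (p : List (Finset V)) (Y : Finset V) :
    (∃! R, Minimal (fun G => G ⊆ Y ∧ ∀ X ∈ p, ¬ G ⊆ X) R) ↔ ShellingStep p Y := by
  constructor
  · rintro ⟨R, hR, huniq⟩ X hX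
    obtain ⟨x, hxR, hxX⟩ := not_subset.1 fun h => hR.prop.2 X hX h
    refine ⟨x, hR.prop.1 hxR, hxX, ?_⟩
    by_contra! hnew
    obtain ⟨M, hMle, hM⟩ := exists_minimal_le_of_wellFoundedLT
      (fun G => G ⊆ Y ∧ ∀ X ∈ p, ¬ G ⊆ X) (Y.erase x) ⟨erase_subset x Y, hnew⟩
    exact notMem_erase x Y (hMle (huniq M hM ▸ hxR))
  · intro hstep
    set R := Y.filter fun x => ∃ Z ∈ p, Y.erase x ⊆ Z
    have hR_new : ∀ X ∈ p, ¬ R ⊆ X := by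
      intro X hX hRX
      obtain ⟨x, hxY, hxX, hcov⟩ := hstep X hX
      exact hxX (hRX (mem_filter.2 ⟨hxY, hcov⟩))
    have hR_le : ∀ G ⊆ Y, (∀ X ∈ p, ¬ G ⊆ X) → R ⊆ G := by
      intro G hGY hG x hxR
      by_contra hxG
      obtain ⟨Z, hZ, hYZ⟩ := (mem_filter.1 hxR).2
      exact hG Z hZ (fun v hv => hYZ (mem_erase.2 ⟨ne_of_mem_of_not_mem hv hxG, hGY hv⟩))
    refine ⟨R, ⟨⟨filter_subset _ _, hR_new⟩, fun G hG hGR => hR_le G hG.1 hG.2⟩, ?_⟩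
    exact fun M hM => le_antisymm (hM.2 ⟨filter_subset _ _, hR_new⟩ (hR_le M hM.1.1 hM.1.2))
      (hR_le M hM.1.1 hM.1.2)

theorem isShelling_iff (l : List (Finset V)) :
    IsShelling l ↔ ∀ (i : ℕ) (hi : i < l.length), ShellingStep (l.take i) l[i] := by
  have hprefix : ∀ (i : Fin l.length) (G : Finset V),
      (∀ j : Fin l.length, j < i → ¬ G ⊆ l.get j) ↔ ∀ X ∈ l.take i, ¬ G ⊆ X := by
    intro i G
    simp only [List.mem_take_iff_getElem, forall_exists_index]
    constructor
    · rintro h X j hj rfl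
      exact h ⟨j, by omega⟩ (Fin.mk_lt_mk.2 (by omega))
    · intro h j hj
      exact h _ j (by omega) rfl
  simp only [IsShelling, hprefix, existsUnique_minimal_iff_shellingStep]
  exact ⟨fun h i hi => h ⟨i, hi⟩, fun h i => h i i.isLt⟩

theorem isShelling_append_singleton (l : List (Finset V)) (Y : Finset V) :
    IsShelling (l ++ [Y]) ↔ IsShelling l ∧ ShellingStep l Y := by
  simp only [isShelling_iff, List.length_append, List.length_singleton]
  constructor
  · intro h
    refine ⟨fun i hi => ?_, ?_⟩
    · simpa [List.take_append_of_le_length hi.le, List.getElem_append_left hi] using h i (by omega)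
    · simpa using h l.length (by omega)
  · rintro ⟨h, hY⟩ i hi
    rcases Nat.lt_succ_iff_lt_or_eq.1 hi with hi | rfl
    · simpa [List.take_append_of_le_length hi.le, List.getElem_append_left hi] using h i hi
    · simpa using hY

theorem ShellingStep.notMem {p : List (Finset V)} {Y : Finset V} (h : ShellingStep p Y) :
    Y ∉ p := fun hY =>
  let ⟨_, hx, hx', _⟩ := h Y hY
  hx' hx

theorem IsShelling.nodup {l : List (Finset V)} (h : IsShelling l) : l.Nodup := by
  induction l using List.reverseRecOn with
  | nil => exact List.nodup_nil
  | append_singleton l Y ih =>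
    obtain ⟨hl, hY⟩ := (isShelling_append_singleton l Y).1 h
    rw [← List.concat_eq_append, List.nodup_concat]
    exact ⟨hY.notMem, ih hl⟩

theorem mem_facets_iff_maximal {Δ : Finset (Finset V)} {F : Finset V} :
    F ∈ facets Δ ↔ Maximal (· ∈ Δ) F := by
  simp only [facets, mem_filter, Maximal]
  exact and_congr_right fun _ =>
    forall₂_congr fun G _ => ⟨fun h hFG => (h hFG).ge, fun h hFG => hFG.antisymm (h hFG)⟩

theorem facets_eq_of_antichain_cover {Δ N : Finset (Finset V)} (hN : N ⊆ Δ)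
    (hcover : ∀ X ∈ Δ, ∃ Y ∈ N, X ⊆ Y) (hanti : ∀ Y ∈ N, ∀ Y' ∈ N, Y ⊆ Y' → Y = Y') :
    facets Δ = N := by
  ext F
  rw [mem_facets_iff_maximal]
  constructor
  · intro hF
    obtain ⟨Y, hY, hFY⟩ := hcover F hF.prop
    exact (hF.eq_of_le (hN hY) hFY).symm ▸ hY
  · intro hF
    refine ⟨hN hF, fun G hG hFG => ?_⟩
    obtain ⟨Y, hY, hGY⟩ := hcover G hG
    exact (hanti F hF Y hY (hFG.trans hGY)).symm ▸ hGY

variable (a b w) in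
def splitFacet (F : Finset V) : Finset (Finset V) :=
  if {a, b} ⊆ F then {insert w (F.erase a), insert w (F.erase b)} else {F}

theorem mem_splitFacet_of_pair_subset {F Y : Finset V} (he : {a, b} ⊆ F) :
    Y ∈ splitFacet a b w F ↔ ∃ y ∈ ({a, b} : Finset V), Y = insert w (F.erase y) := by
  simp [splitFacet, he]

theorem splitFacet_of_not_pair_subset {F : Finset V} (he : ¬ {a, b} ⊆ F) :
    splitFacet a b w F = {F} := by
  simp [splitFacet, he]

theorem mem_subdivide {Δ : Finset (Finset V)} {X : Finset V} :
    X ∈ subdivide Δ a b w ↔ (X ∈ Δ ∧ ¬ {a, b} ⊆ X) ∨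
      ∃ s ∈ Δ, {a, b} ⊆ s ∧ ∃ y ∈ ({a, b} : Finset V), X = insert w (s.erase y) := by
  simp only [subdivide, mem_union, mem_filter, mem_image, mem_insert, mem_singleton]
  constructor
  · rintro ((h | ⟨s, ⟨hs, he⟩, rfl⟩) | ⟨s, ⟨hs, he⟩, rfl⟩)
    exacts [.inl h, .inr ⟨s, hs, he, a, .inl rfl, rfl⟩, .inr ⟨s, hs, he, b, .inr rfl, rfl⟩]
  · rintro (h | ⟨s, hs, he, y, rfl | rfl, rfl⟩)
    exacts [.inl (.inl h), .inl (.inr ⟨s, ⟨hs, he⟩, rfl⟩), .inr ⟨s, ⟨hs, he⟩, rfl⟩]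

theorem eq_of_mem_splitFacet_of_notMem {F Y : Finset V} (hY : Y ∈ splitFacet a b w F)
    (hwY : w ∉ Y) : Y = F := by
  by_cases he : {a, b} ⊆ F
  · obtain ⟨y, -, rfl⟩ := (mem_splitFacet_of_pair_subset he).1 hY
    exact absurd (mem_insert_self w _) hwY
  · simpa [splitFacet_of_not_pair_subset he] using hY

theorem splitFacet_subset_insert {F Y : Finset V} (hY : Y ∈ splitFacet a b w F) :
    Y ⊆ insert w F := by
  by_cases he : {a, b} ⊆ F
  · obtain ⟨y, -, rfl⟩ := (mem_splitFacet_of_pair_subset he).1 hY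
    exact insert_subset_insert w (erase_subset y F)
  · rw [splitFacet_of_not_pair_subset he, mem_singleton] at hY
    exact hY ▸ subset_insert w Y

theorem pair_subset_of_mem_splitFacet {F Y : Finset V} (hwF : w ∉ F)
    (hY : Y ∈ splitFacet a b w F) (hwY : w ∈ Y) : {a, b} ⊆ F := by
  by_contra he
  rw [splitFacet_of_not_pair_subset he, mem_singleton] at hY
  exact hwF (hY ▸ hwY)

theorem subset_of_mem_splitFacet {F F' Y Y' : Finset V} (hwF : w ∉ F) (hwF' : w ∉ F')
    (hY : Y ∈ splitFacet a b w F) (hY' : Y' ∈ splitFacet a b w F') (hYY' : Y ⊆ Y') :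
    F ⊆ F' := by
  intro v hv
  by_cases hvY : v ∈ Y
  · exact (mem_insert.1 (splitFacet_subset_insert hY' (hYY' hvY))).resolve_left
      (ne_of_mem_of_not_mem hv hwF)
  · have hwY : w ∈ Y := by
      by_contra hwY
      exact hvY ((eq_of_mem_splitFacet_of_notMem hY hwY).symm ▸ hv)
    obtain ⟨y, hy, rfl⟩ :=
      (mem_splitFacet_of_pair_subset (pair_subset_of_mem_splitFacet hwF hY hwY)).1 hY
    obtain rfl : v = y := by
      by_contra hvy
      exact hvY (mem_insert_of_mem (mem_erase.2 ⟨hvy, hv⟩))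
    exact pair_subset_of_mem_splitFacet hwF' hY' (hYY' hwY) hy

theorem eq_of_mem_splitFacet_of_subset {F Y Y' : Finset V} (hwF : w ∉ F)
    (hY : Y ∈ splitFacet a b w F) (hY' : Y' ∈ splitFacet a b w F) (hYY' : Y ⊆ Y') :
    Y = Y' := by
  by_cases he : {a, b} ⊆ F
  · obtain ⟨y, hy, rfl⟩ := (mem_splitFacet_of_pair_subset he).1 hY
    obtain ⟨z, hz, rfl⟩ := (mem_splitFacet_of_pair_subset he).1 hY'
    obtain rfl : y = z := by
      by_contra hyz
      have hzY := hYY' (mem_insert_of_mem (mem_erase.2 ⟨Ne.symm hyz, he hz⟩))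
      rcases mem_insert.1 hzY with rfl | hz'
      · exact hwF (he hz)
      · exact notMem_erase z F hz'
    rfl
  · rw [splitFacet_of_not_pair_subset he, mem_singleton] at hY hY'
    rw [hY, hY']

theorem facets_subdivide {Δ : Finset (Finset V)} (hw : w ∉ vertexSet Δ) :
    facets (subdivide Δ a b w) = (facets Δ).biUnion (splitFacet a b w) := by
  have hwΔ : ∀ s ∈ Δ, w ∉ s := fun s hs hws => hw (mem_sup.2 ⟨s, hs, hws⟩)
  have hfacet : ∀ {F}, F ∈ facets Δ → F ∈ Δ := fun hF => (mem_filter.1 hF).1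
  apply facets_eq_of_antichain_cover
  · intro Y hY
    obtain ⟨F, hF, hYF⟩ := mem_biUnion.1 hY
    by_cases he : {a, b} ⊆ F
    · exact mem_subdivide.2 (.inr ⟨F, hfacet hF, he, (mem_splitFacet_of_pair_subset he).1 hYF⟩)
    · rw [splitFacet_of_not_pair_subset he, mem_singleton] at hYF
      exact mem_subdivide.2 (.inl ⟨hYF ▸ hfacet hF, hYF ▸ he⟩)
  · intro X hX
    rcases mem_subdivide.1 hX with ⟨hXΔ, he⟩ | ⟨s, hs, he, y, hy, rfl⟩
    · obtain ⟨F, hXF, hF⟩ := Δ.exists_le_maximal hXΔ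
      have hF' := mem_facets_iff_maximal.2 hF
      by_cases heF : {a, b} ⊆ F
      · obtain ⟨y, hy, hyX⟩ := not_subset.1 he
        refine ⟨insert w (F.erase y), mem_biUnion.2 ⟨F, hF', ?_⟩, fun v hv => ?_⟩
        · exact (mem_splitFacet_of_pair_subset heF).2 ⟨y, hy, rfl⟩
        · exact mem_insert_of_mem (mem_erase.2 ⟨ne_of_mem_of_not_mem hv hyX, hXF hv⟩)
      · exact ⟨F, mem_biUnion.2 ⟨F, hF', by simp [splitFacet_of_not_pair_subset heF]⟩, hXF⟩
    · obtain ⟨F, hsF, hF⟩ := Δ.exists_le_maximal hs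
      refine ⟨insert w (F.erase y), mem_biUnion.2 ⟨F, mem_facets_iff_maximal.2 hF, ?_⟩,
        insert_subset_insert w (erase_subset_erase y hsF)⟩
      exact (mem_splitFacet_of_pair_subset (he.trans hsF)).2 ⟨y, hy, rfl⟩
  · intro Y hY Y' hY' hYY'
    obtain ⟨F, hF, hYF⟩ := mem_biUnion.1 hY
    obtain ⟨F', hF', hYF'⟩ := mem_biUnion.1 hY'
    obtain rfl : F = F' := (mem_facets_iff_maximal.1 hF).eq_of_le (hfacet hF')
      (subset_of_mem_splitFacet (hwΔ F (hfacet hF)) (hwΔ F' (hfacet hF')) hYF hYF' hYY')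
    exact eq_of_mem_splitFacet_of_subset (hwΔ F (hfacet hF)) hYF hYF' hYY'

end SC

namespace List

variable {α β : Type*}

def flatMapWithPrefix (f : List α → α → List β) : List α → List β
  | [] => []
  | x :: l => f [] x ++ flatMapWithPrefix (fun p => f (x :: p)) l

theorem flatMapWithPrefix_append_singleton (f : List α → α → List β) (l : List α) (x : α) :
    flatMapWithPrefix f (l ++ [x]) = flatMapWithPrefix f l ++ f l x := by
  induction l generalizing f with
  | nil => simp [flatMapWithPrefix]
  | cons y l ih => simp [flatMapWithPrefix, ih]

theorem mem_flatMapWithPrefix {f : List α → α → List β} {g : α → β → Prop}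
    (hfg : ∀ p x y, y ∈ f p x ↔ g x y) (l : List α) (y : β) :
    y ∈ flatMapWithPrefix f l ↔ ∃ x ∈ l, g x y := by
  induction l using List.reverseRecOn with
  | nil => simp [flatMapWithPrefix]
  | append_singleton l x ih => simp [flatMapWithPrefix_append_singleton, ih, hfg, or_and_right,
      exists_or]

end List

namespace SC

variable {V : Type*} [DecidableEq V] {a b w : V}

variable (a b w) in
def splitBlock (p : List (Finset V)) (F : Finset V) : List (Finset V) :=
  if {a, b} ⊆ F then
    if ∃ Z ∈ p, F.erase a ⊆ Z then [insert w (F.erase a), insert w (F.erase b)]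
    else [insert w (F.erase b), insert w (F.erase a)]
  else [F]

variable (a b w) in
def subdivideShelling (l : List (Finset V)) : List (Finset V) :=
  l.flatMapWithPrefix (splitBlock a b w)

theorem mem_subdivideShelling {l : List (Finset V)} {X : Finset V} :
    X ∈ subdivideShelling a b w l ↔ ∃ F ∈ l, X ∈ splitFacet a b w F := by
  refine List.mem_flatMapWithPrefix (fun p F X => ?_) l X
  unfold splitBlock splitFacet
  split_ifs <;> simp [or_comm]

theorem notMem_of_mem_splitFacet {G X : Finset V} {x : V} (hX : X ∈ splitFacet a b w G)
    (hxG : x ∉ G) (hxw : x ≠ w) : x ∉ X := fun hxX =>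
  (mem_insert.1 (splitFacet_subset_insert hX hxX)).elim hxw hxG

theorem exists_mem_splitFacet_superset {H S : Finset V} (hSH : S ⊆ H) (hS : ¬ {a, b} ⊆ S) :
    ∃ Z ∈ splitFacet a b w H, S ⊆ Z := by
  by_cases he : {a, b} ⊆ H
  · obtain ⟨y, hy, hyS⟩ := not_subset.1 hS
    refine ⟨insert w (H.erase y), (mem_splitFacet_of_pair_subset he).2 ⟨y, hy, rfl⟩, ?_⟩
    exact fun v hv => mem_insert_of_mem (mem_erase.2 ⟨ne_of_mem_of_not_mem hv hyS, hSH hv⟩)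
  · exact ⟨H, by simp [splitFacet_of_not_pair_subset he], hSH⟩

theorem exists_mem_splitFacet_superset_erase {F H : Finset V} {x y : V} (he : {a, b} ⊆ F)
    (hy : y ∈ ({a, b} : Finset V)) (hx : x ∉ ({a, b} : Finset V)) (hFH : F.erase x ⊆ H) :
    ∃ Z ∈ splitFacet a b w H, (insert w (F.erase y)).erase x ⊆ Z := by
  have heH : {a, b} ⊆ H := fun v hv => hFH (mem_erase.2 ⟨ne_of_mem_of_not_mem hv hx, he hv⟩)
  refine ⟨insert w (H.erase y), (mem_splitFacet_of_pair_subset heH).2 ⟨y, hy, rfl⟩, ?_⟩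
  intro v hv
  simp only [mem_erase, mem_insert] at hv ⊢
  obtain ⟨hvx, rfl | ⟨hvy, hvF⟩⟩ := hv
  · exact .inl rfl
  · exact .inr ⟨hvy, hFH (mem_erase.2 ⟨hvx, hvF⟩)⟩

section

variable {p : List (Finset V)} {F : Finset V}

theorem ShellingStep.subdivideShelling_of_not_pair_subset (hstep : ShellingStep p F)
    (hwF : w ∉ F) (he : ¬ {a, b} ⊆ F) : ShellingStep (subdivideShelling a b w p) F := by
  intro X hX
  obtain ⟨G, hG, hXG⟩ := mem_subdivideShelling.1 hX
  obtain ⟨x, hxF, hxG, H, hH, hFH⟩ := hstep G hG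
  obtain ⟨Z, hZ, hFZ⟩ :=
    exists_mem_splitFacet_superset hFH fun h => he (h.trans (erase_subset x F))
  exact ⟨x, hxF, notMem_of_mem_splitFacet hXG hxG (ne_of_mem_of_not_mem hxF hwF), Z,
    mem_subdivideShelling.2 ⟨H, hH, hZ⟩, hFZ⟩

theorem ShellingStep.subdivideShelling_first (hstep : ShellingStep p F)
    (hwp : ∀ G ∈ p, w ∉ G) (hwF : w ∉ F) (he : {a, b} ⊆ F) {c : V}
    (hc : c ∈ ({a, b} : Finset V))
    (hcov : (∃ y ∈ ({a, b} : Finset V), ∃ H ∈ p, F.erase y ⊆ H) → ∃ H ∈ p, F.erase c ⊆ H) :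
    ShellingStep (subdivideShelling a b w p) (insert w (F.erase c)) := by
  intro X hX
  obtain ⟨G, hG, hXG⟩ := mem_subdivideShelling.1 hX
  obtain ⟨x, hxF, hxG, H, hH, hFH⟩ := hstep G hG
  by_cases hxe : x ∈ ({a, b} : Finset V)
  · rw [splitFacet_of_not_pair_subset fun h => hxG (h hxe), mem_singleton] at hXG
    obtain ⟨H', hH', hFH'⟩ := hcov ⟨x, hxe, H, hH, hFH⟩
    obtain ⟨Z, hZ, hFZ⟩ :=
      exists_mem_splitFacet_superset hFH' fun h => notMem_erase c F (h hc)
    refine ⟨w, mem_insert_self w _, hXG ▸ hwp G hG, Z, mem_subdivideShelling.2 ⟨H', hH', hZ⟩, ?_⟩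
    rwa [erase_insert fun h => hwF (mem_of_mem_erase h)]
  · obtain ⟨Z, hZ, hFZ⟩ := exists_mem_splitFacet_superset_erase (w := w) he hc hxe hFH
    exact ⟨x, mem_insert_of_mem (mem_erase.2 ⟨(ne_of_mem_of_not_mem hc hxe).symm, hxF⟩),
      notMem_of_mem_splitFacet hXG hxG (ne_of_mem_of_not_mem hxF hwF), Z,
      mem_subdivideShelling.2 ⟨H, hH, hZ⟩, hFZ⟩

theorem ShellingStep.subdivideShelling_second (hstep : ShellingStep p F)
    (hwp : ∀ G ∈ p, w ∉ G) (hwF : w ∉ F) (he : {a, b} ⊆ F) {c d : V}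
    (hc : c ∈ ({a, b} : Finset V)) (hd : d ∈ ({a, b} : Finset V)) (hcd : c ≠ d) :
    ShellingStep (subdivideShelling a b w p ++ [insert w (F.erase c)])
      (insert w (F.erase d)) := by
  have hcw : c ≠ w := ne_of_mem_of_not_mem (he hc) hwF
  intro X hX
  by_cases hcX : c ∈ X
  · have hXQ : X ∈ subdivideShelling a b w p := by
      refine (List.mem_append.1 hX).resolve_right fun h => ?_
      rw [List.mem_singleton.1 h] at hcX
      simp [hcw] at hcX
    obtain ⟨G, hG, hXG⟩ := mem_subdivideShelling.1 hXQ
    obtain ⟨x, hxF, hxG, H, hH, hFH⟩ := hstep G hG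
    by_cases hxe : x ∈ ({a, b} : Finset V)
    · rw [splitFacet_of_not_pair_subset fun h => hxG (h hxe), mem_singleton] at hXG
      obtain rfl : x = d := by
        have hxc : x ≠ c := fun h => hxG (h ▸ hXG ▸ hcX)
        simp only [mem_insert, mem_singleton] at hc hd hxe
        grind
      obtain ⟨Z, hZ, hFZ⟩ := exists_mem_splitFacet_superset hFH fun h => notMem_erase x F (h hd)
      refine ⟨w, mem_insert_self w _, hXG ▸ hwp G hG, Z,
        List.mem_append_left _ (mem_subdivideShelling.2 ⟨H, hH, hZ⟩), ?_⟩
      rwa [erase_insert fun h => hwF (mem_of_mem_erase h)]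
    · obtain ⟨Z, hZ, hFZ⟩ := exists_mem_splitFacet_superset_erase (w := w) he hd hxe hFH
      exact ⟨x, mem_insert_of_mem (mem_erase.2 ⟨(ne_of_mem_of_not_mem hd hxe).symm, hxF⟩),
        notMem_of_mem_splitFacet hXG hxG (ne_of_mem_of_not_mem hxF hwF), Z,
        List.mem_append_left _ (mem_subdivideShelling.2 ⟨H, hH, hZ⟩), hFZ⟩
  · refine ⟨c, mem_insert_of_mem (mem_erase.2 ⟨hcd, he hc⟩), hcX, _,
      List.mem_append_right _ (List.mem_singleton_self _), fun v hv => ?_⟩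
    simp only [mem_erase, mem_insert] at hv ⊢
    grind

end

theorem IsShelling.subdivideShelling (hab : a ≠ b) {l : List (Finset V)} (hl : IsShelling l)
    (hw : ∀ F ∈ l, w ∉ F) : IsShelling (subdivideShelling a b w l) := by
  induction l using List.reverseRecOn with
  | nil => exact fun i => i.elim0
  | append_singleton l F ih =>
    obtain ⟨hl, hstep⟩ := (isShelling_append_singleton l F).1 hl
    have hwl : ∀ G ∈ l, w ∉ G := fun G hG => hw G (List.mem_append_left _ hG)
    have hwF : w ∉ F := hw F (List.mem_append_right _ (List.mem_singleton_self F))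
    have hQ := ih hl hwl
    have ha : a ∈ ({a, b} : Finset V) := mem_insert_self a {b}
    have hb : b ∈ ({a, b} : Finset V) := mem_insert_of_mem (mem_singleton_self b)
    rw [SC.subdivideShelling, List.flatMapWithPrefix_append_singleton, splitBlock]
    split_ifs with he hcov
    · rw [← List.singleton_append, ← List.append_assoc, isShelling_append_singleton,
        isShelling_append_singleton]
      exact ⟨⟨hQ, hstep.subdivideShelling_first hwl hwF he ha fun _ => hcov⟩,
        hstep.subdivideShelling_second hwl hwF he ha hb hab⟩
    · have hcov' : (∃ y ∈ ({a, b} : Finset V), ∃ H ∈ l, F.erase y ⊆ H) →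
          ∃ H ∈ l, F.erase b ⊆ H := by
        rintro ⟨y, hy, hyH⟩
        rcases mem_insert.1 hy with rfl | hy
        exacts [absurd hyH hcov, mem_singleton.1 hy ▸ hyH]
      rw [← List.singleton_append, ← List.append_assoc, isShelling_append_singleton,
        isShelling_append_singleton]
      exact ⟨⟨hQ, hstep.subdivideShelling_first hwl hwF he hb hcov'⟩,
        hstep.subdivideShelling_second hwl hwF he hb ha hab.symm⟩
    · exact (isShelling_append_singleton _ F).2
        ⟨hQ, hstep.subdivideShelling_of_not_pair_subset hwF he⟩

end SC

theorem subdivision_preserves_shellable_general {V : Type*} [DecidableEq V]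
    (Δ : Finset (Finset V)) (a b w : V)
    (hshell : SC.Shellable Δ) (hab : a ≠ b) (hw : w ∉ SC.vertexSet Δ) :
    SC.Shellable (SC.subdivide Δ a b w) := by
  obtain ⟨l, -, hl, hshelling⟩ := hshell
  have hwl : ∀ F ∈ l, w ∉ F := fun F hF hwF =>
    hw (mem_sup.2 ⟨F, (mem_filter.1 (hl ▸ List.mem_toFinset.2 hF)).1, hwF⟩)
  have hsub := hshelling.subdivideShelling hab hwl
  refine ⟨_, hsub.nodup, ?_, hsub⟩
  ext X
  simp [SC.mem_subdivideShelling, SC.facets_subdivide hw, ← hl]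

theorem subdivision_preserves_shellable {V : Type*} [DecidableEq V]
    (Δ : Finset (Finset V)) (a b w : V)
    (hcplx : SC.IsComplex Δ)
    (hpure : ∀ F ∈ SC.facets Δ, F.card = Δ.sup Finset.card)
    (hshell : SC.Shellable Δ)
    (hedge : ({a, b} : Finset V) ∈ Δ) (hab : a ≠ b)
    (hw : w ∉ SC.vertexSet Δ) :
    SC.Shellable (SC.subdivide Δ a b w) :=
  subdivision_preserves_shellable_general Δ a b w hshell hab hw
end
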